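/- arXiv:0709.3835 — 2 statements merged into one kernel-verified Lean document; each statement's English description precedes it below -/
import Mathlib

section
/- Variant of Chernoff's bound: let X be a finite set, P a probability distribution on X, and let x = (x₁,…,x_n) be drawn according to the n-fold product distribution P^n. Then for any δ > 0, the probability that ‖λ_x − P‖₁ > δ is at most 2^{−n(δ²/(2 ln 2) − |X|·log₂(n+1)/n)}, where λ_x is the empirical distribution of x, i.e., λ_x(a) = |{i : x_i = a}|/n. -/
open scoped BigOperators ComplexOrder
open Matrix MeasureTheory

noncomputable section

/-- A quantum state: a positive semidefinite complex matrix of unit trace. -/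
def IsState {n : Type} [Fintype n] (M : Matrix n n ℂ) : Prop :=
  M.PosSemidef ∧ M.trace = 1

/-- Kronecker product of rectangular complex matrices. -/
def kron {I J K L : Type} (A : Matrix I J ℂ) (B : Matrix K L ℂ) :
    Matrix (I × K) (J × L) ℂ :=
  Matrix.of fun p q => A p.1 q.1 * B p.2 q.2

/-- The projector onto the maximally entangled vector `(1/√D) ∑ᵢ |i,i⟩`. -/
def phiD (D : ℕ) : Matrix (Fin D × Fin D) (Fin D × Fin D) ℂ :=
  Matrix.of fun p q => if p.1 = p.2 ∧ q.1 = q.2 then (1 / (D : ℂ)) else 0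

/-- Single-copy undistillability (trace form):
`tr[(A ⊗ B) ω (A ⊗ B)† (φ₂ − I₄/2)] ≤ 0` for all 2 × m matrices A, B. -/
def SingleCopyUndistillable {I : Type} [Fintype I] [DecidableEq I]
    (ω : Matrix (I × I) (I × I) ℂ) : Prop :=
  ∀ A B : Matrix (Fin 2) I ℂ,
    (Matrix.trace (kron A B * ω * (kron A B)ᴴ * (phiD 2 - (1 / 2 : ℂ) • 1))).re ≤ 0

/-- The SLOCC `D`-dimensional singlet fraction. -/
def singletFraction (D : ℕ) {I : Type} [Fintype I] [DecidableEq I]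
    (ω : Matrix (I × I) (I × I) ℂ) : ℝ :=
  sSup {r : ℝ | ∃ A B : Matrix (Fin D) I ℂ,
    Matrix.trace (kron A B * ω * (kron A B)ᴴ) ≠ 0 ∧
    r = (Matrix.trace (kron A B * ω * (kron A B)ᴴ * phiD D)).re /
        (Matrix.trace (kron A B * ω * (kron A B)ᴴ)).re}

/-- Single-copy undistillability, singlet-fraction form: `F₂(ω) = 1/2`. -/
def SingleCopyUndistillableF {I : Type} [Fintype I] [DecidableEq I]
    (ω : Matrix (I × I) (I × I) ℂ) : Prop :=
  singletFraction 2 ω = 1 / 2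

/-- `n`-fold tensor power of a bipartite state, with all A-factors grouped on one
side and all B-factors on the other. -/
def tensorPow {ι : Type} [Fintype ι] (ρ : Matrix (ι × ι) (ι × ι) ℂ) (n : ℕ) :
    Matrix ((Fin n → ι) × (Fin n → ι)) ((Fin n → ι) × (Fin n → ι)) ℂ :=
  Matrix.of fun x y => ∏ i : Fin n, ρ (x.1 i, x.2 i) (y.1 i, y.2 i)

/-- Permutation symmetry of a state on `ℋ^{⊗k}`: `P_π ω P_π = ω` for every `π ∈ S_k`,
expressed entrywise. -/
def PermSymmetric {ι : Type} {k : ℕ}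
    (ω : Matrix ((Fin k → ι) × (Fin k → ι)) ((Fin k → ι) × (Fin k → ι)) ℂ) : Prop :=
  ∀ (π : Equiv.Perm (Fin k)) x y,
    ω (x.1 ∘ π, x.2 ∘ π) (y.1 ∘ π, y.2 ∘ π) = ω x y

def fillAt {ι : Type} {k : ℕ} (m : Fin k) (a : ι)
    (r : {i : Fin k // i ≠ m} → ι) : Fin k → ι :=
  fun i => if h : i = m then a else r ⟨i, h⟩

/-- Partial trace over all bipartite factors except the `m`-th one. -/
def reduceAt {ι : Type} [Fintype ι] {k : ℕ} (m : Fin k)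
    (ω : Matrix ((Fin k → ι) × (Fin k → ι)) ((Fin k → ι) × (Fin k → ι)) ℂ) :
    Matrix (ι × ι) (ι × ι) ℂ :=
  Matrix.of fun p q =>
    ∑ rA : {i : Fin k // i ≠ m} → ι, ∑ rB : {i : Fin k // i ≠ m} → ι,
      ω (fillAt m p.1 rA, fillAt m p.2 rB) (fillAt m q.1 rA, fillAt m q.2 rB)

/-- Copy-correlated `k`-undistillability (trace form of single-copy undistillability):
there is a permutation-symmetric single-copy-undistillable extension on `ℋ^{⊗k}`
whose reduction to the first bipartite factor is `ρ`. -/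
def CopyCorrKUndistillable (ι : Type) [Fintype ι] [DecidableEq ι] (k : ℕ) (hk : 0 < k)
    (ρ : Matrix (ι × ι) (ι × ι) ℂ) : Prop :=
  ∃ ω : Matrix ((Fin k → ι) × (Fin k → ι)) ((Fin k → ι) × (Fin k → ι)) ℂ,
    IsState ω ∧ PermSymmetric ω ∧ SingleCopyUndistillable ω ∧
      reduceAt (⟨0, hk⟩ : Fin k) ω = ρ

/-- Copy-correlated `k`-undistillability (singlet-fraction form). -/
def CopyCorrKUndistillableF (ι : Type) [Fintype ι] [DecidableEq ι] (k : ℕ) (hk : 0 < k)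
    (ρ : Matrix (ι × ι) (ι × ι) ℂ) : Prop :=
  ∃ ω : Matrix ((Fin k → ι) × (Fin k → ι)) ((Fin k → ι) × (Fin k → ι)) ℂ,
    IsState ω ∧ PermSymmetric ω ∧ SingleCopyUndistillableF ω ∧
      reduceAt (⟨0, hk⟩ : Fin k) ω = ρ

/-- Dual cone of a set of matrices, inside the Hermitian matrices. -/
def dualCone {n : Type} [Fintype n] (M : Set (Matrix n n ℂ)) : Set (Matrix n n ℂ) :=
  {X | X.IsHermitian ∧ ∀ ρ ∈ M, 0 ≤ (Matrix.trace (X * ρ)).re}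

/-- Separability: membership in the closed convex hull of the product states. -/
def SeparableState {ι : Type} [Fintype ι] (σ : Matrix (ι × ι) (ι × ι) ℂ) : Prop :=
  σ ∈ closure (convexHull ℝ
    {M : Matrix (ι × ι) (ι × ι) ℂ | ∃ α β : Matrix ι ι ℂ,
      IsState α ∧ IsState β ∧ M = kron α β})

/-- Trace norm `‖X‖₁ = tr √(X†X)`. -/
def traceNorm {n : Type} [Fintype n] [DecidableEq n] (X : Matrix n n ℂ) : ℝ :=
  (((Matrix.posSemidef_conjTranspose_mul_self X).1.eigenvectorUnitary : Matrix n n ℂ) *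
    Matrix.diagonal (fun i => ((Real.sqrt ∘ (Matrix.posSemidef_conjTranspose_mul_self X).1.eigenvalues) i : ℂ)) *
    (star (Matrix.posSemidef_conjTranspose_mul_self X).1.eigenvectorUnitary : Matrix n n ℂ)).trace.re

/-- Symmetrization `Ŝ_k(Q) = (1/k!) ∑_{π ∈ S_k} P_π Q P_π`. -/
def symmetrize {ι : Type} {k : ℕ}
    (Q : Matrix ((Fin k → ι) × (Fin k → ι)) ((Fin k → ι) × (Fin k → ι)) ℂ) :
    Matrix ((Fin k → ι) × (Fin k → ι)) ((Fin k → ι) × (Fin k → ι)) ℂ :=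
  (1 / (Nat.factorial k : ℂ)) •
    ∑ π : Equiv.Perm (Fin k),
      Matrix.of fun x y => Q (x.1 ∘ π, x.2 ∘ π) (y.1 ∘ π, y.2 ∘ π)


instance matMeasurableSpace {m n : Type} [Fintype m] [Fintype n] :
    MeasurableSpace (Matrix m n ℂ) := borel _

/-- Partial trace over the last `n − k` bipartite factors. -/
def traceTail {ι : Type} [Fintype ι] {n k : ℕ} (h : k ≤ n)
    (ω : Matrix ((Fin n → ι) × (Fin n → ι)) ((Fin n → ι) × (Fin n → ι)) ℂ) :
    Matrix ((Fin k → ι) × (Fin k → ι)) ((Fin k → ι) × (Fin k → ι)) ℂ :=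
  Matrix.of fun x y =>
    ∑ tA : Fin (n - k) → ι, ∑ tB : Fin (n - k) → ι,
      ω (fun i => Fin.append x.1 tA (Fin.cast (by omega) i),
         fun i => Fin.append x.2 tB (Fin.cast (by omega) i))
        (fun i => Fin.append y.1 tA (Fin.cast (by omega) i),
         fun i => Fin.append y.2 tB (Fin.cast (by omega) i))

/-- Partial trace over the last bipartite factor. -/
def traceLast {ι : Type} [Fintype ι] {k : ℕ}
    (ω : Matrix ((Fin (k + 1) → ι) × (Fin (k + 1) → ι))
      ((Fin (k + 1) → ι) × (Fin (k + 1) → ι)) ℂ) :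
    Matrix ((Fin k → ι) × (Fin k → ι)) ((Fin k → ι) × (Fin k → ι)) ℂ :=
  Matrix.of fun x y => ∑ a : ι, ∑ b : ι,
    ω (Fin.snoc x.1 a, Fin.snoc x.2 b) (Fin.snoc y.1 a, Fin.snoc y.2 b)

/-- `X ⊗ I^{⊗(k−1)}`: the operator acting as `X` on the first bipartite factor
and as the identity on the remaining `k − 1` factors. -/
def firstFactorOp {ι : Type} [DecidableEq ι] (k : ℕ) (hk : 0 < k)
    (X : Matrix (ι × ι) (ι × ι) ℂ) :
    Matrix ((Fin k → ι) × (Fin k → ι)) ((Fin k → ι) × (Fin k → ι)) ℂ :=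
  Matrix.of fun x y =>
    X (x.1 ⟨0, hk⟩, x.2 ⟨0, hk⟩) (y.1 ⟨0, hk⟩, y.2 ⟨0, hk⟩) *
      ∏ i : Fin k, if i = ⟨0, hk⟩ then 1
        else (if x.1 i = y.1 i ∧ x.2 i = y.2 i then 1 else 0)

/-- `⟨φ| ⊗ I₂` with `|φ⟩ = ∑ᵢ |i,i⟩` the unnormalized maximally entangled vector. -/
def jamA (d : ℕ) : Matrix (Fin 2) ((Fin d × Fin d) × Fin 2) ℂ :=
  Matrix.of fun s p => (if p.1.1 = p.1.2 then (1 : ℂ) else 0) * (if s = p.2 then 1 else 0)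

/-- `σ ⊗ ρ` with tensor factors ordered as `((A₂A₁A₃), (B₂B₁B₃))`. -/
def jamState (d : ℕ) (σ : Matrix (Fin d × Fin d) (Fin d × Fin d) ℂ)
    (ρ : Matrix ((Fin d × Fin 2) × (Fin d × Fin 2))
      ((Fin d × Fin 2) × (Fin d × Fin 2)) ℂ) :
    Matrix (((Fin d × Fin d) × Fin 2) × ((Fin d × Fin d) × Fin 2))
      (((Fin d × Fin d) × Fin 2) × ((Fin d × Fin d) × Fin 2)) ℂ :=
  Matrix.of fun x y =>
    σ (x.1.1.1, x.2.1.1) (y.1.1.1, y.2.1.1) *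
      ρ ((x.1.1.2, x.1.2), (x.2.1.2, x.2.2)) ((y.1.1.2, y.1.2), (y.2.1.2, y.2.2))

/-- Joint operator `ρ ⊗ σ`, regrouped as a bipartite operator across the cut
joining both A-parts against both B-parts. -/
def jointState {ι κ : Type} (ρ : Matrix (ι × ι) (ι × ι) ℂ)
    (σ : Matrix (κ × κ) (κ × κ) ℂ) :
    Matrix ((ι × κ) × (ι × κ)) ((ι × κ) × (ι × κ)) ℂ :=
  Matrix.of fun x y =>
    ρ (x.1.1, x.2.1) (y.1.1, y.2.1) * σ (x.1.2, x.2.2) (y.1.2, y.2.2)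

/-!
Method of types. Write `q` for the empirical distribution (type) of `x`. If every letter of `x`
has positive probability then `Pⁿ(x) = e^{-n D(q‖P)} qⁿ(x)`, so by Pinsker's inequality
`D(q‖P) ≥ ‖q - P‖₁² / 2` every `x` in the event has `Pⁿ(x) ≤ e^{-nδ²/2} qⁿ(x)`. Grouping the
sequences by type, those of type `q` carry `qⁿ`-mass at most `1`, and there are at most
`(n + 1)^|X|` types. Pinsker's inequality itself follows from the pointwise bound
`t log t - t + 1 ≥ 3 (t - 1)² / (2 (t + 2))` and the Cauchy–Schwarz inequality.
-/

open Real InformationTheory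

open Set in
theorem three_mul_sq_div_le_klFun {t : ℝ} (ht : 0 ≤ t) :
    3 * (t - 1) ^ 2 / (2 * (t + 2)) ≤ klFun t := by
  let f : ℝ → ℝ := fun t ↦ klFun t - 3 / 2 * (t - 4 + 9 * (t + 2)⁻¹)
  let f' : ℝ → ℝ := fun t ↦ log t - 3 / 2 * (1 - 9 * ((t + 2) ^ 2)⁻¹)
  have hf : ∀ t, 0 < t → HasDerivAt f (f' t) t := by
    intro t ht
    have hinv := ((hasDerivAt_id' t).add_const 2).fun_inv (by positivity : t + 2 ≠ 0)
    refine ((hasDerivAt_klFun ht.ne').fun_sub ((((hasDerivAt_id' t).sub_const 4).fun_add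
      (hinv.const_mul 9)).const_mul (3 / 2))).congr_deriv ?_
    simp only [f']
    field_simp
    ring
  have hf' : ∀ t, 0 < t → HasDerivAt f' (1 / t - 27 / (t + 2) ^ 3) t := by
    intro t ht
    have hinv := (((hasDerivAt_id' t).add_const 2).fun_pow 2).fun_inv
      (by positivity : (t + 2) ^ 2 ≠ 0)
    refine ((hasDerivAt_log ht.ne').fun_sub
      (((hinv.const_mul 9).const_sub 1).const_mul (3 / 2))).congr_deriv ?_
    field_simp
    ring
  -- `(t + 2) ^ 3 ≥ 27 t` is AM–GM for `t, 1, 1`, so `f'` is monotone and vanishes at `1`.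
  have hf'_mono : MonotoneOn f' (Ioi 0) := by
    refine monotoneOn_of_deriv_nonneg (convex_Ioi 0)
      (fun t ht ↦ (hf' t ht).continuousAt.continuousWithinAt) ?_ ?_ <;> rw [interior_Ioi]
    · exact fun t ht ↦ (hf' t ht).differentiableAt.differentiableWithinAt
    · intro t (ht : 0 < t)
      rw [(hf' t ht).deriv, sub_nonneg, div_le_div_iff₀ (by positivity) ht]
      nlinarith [sq_nonneg (t - 1), mul_pos ht ht]
  have hf'_one : f' 1 = 0 := by norm_num [f']
  have hmin : IsMinOn f (Ici 0) 1 := by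
    refine isMinOn_Ici_of_deriv ?_ (hf 1 one_pos).continuousAt
      (fun t ht ↦ (hf t ht.1).differentiableAt.differentiableWithinAt)
      (fun t ht ↦ (hf t (one_pos.trans ht)).differentiableAt.differentiableWithinAt)
      (fun t ht ↦ ?_) (fun t ht ↦ ?_)
    · exact continuous_klFun.continuousAt.sub (by fun_prop (disch := norm_num))
    · rw [(hf t ht.1).deriv, ← hf'_one]
      exact hf'_mono ht.1 (mem_Ioi.2 one_pos) ht.2.le
    · rw [(hf t (one_pos.trans ht)).deriv, ← hf'_one]
      exact hf'_mono (mem_Ioi.2 one_pos) (mem_Ioi.2 (one_pos.trans ht)) ht.le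
  have h0 : f 1 ≤ f t := hmin ht
  have heq : 3 * (t - 1) ^ 2 / (2 * (t + 2)) = 3 / 2 * (t - 4 + 9 * (t + 2)⁻¹) := by
    field_simp; ring
  norm_num [f, klFun_one] at h0
  linarith

theorem three_mul_sq_div_le_mul_log_div_sub_add {p q : ℝ} (hp : 0 ≤ p) (hq : 0 ≤ q)
    (hqp : p = 0 → q = 0) :
    3 * (q - p) ^ 2 / (2 * (q + 2 * p)) ≤ q * log (q / p) - q + p := by
  rcases hp.eq_or_lt with rfl | hp
  · simp [hqp rfl]
  have h := mul_le_mul_of_nonneg_left (three_mul_sq_div_le_klFun (div_nonneg hq hp.le)) hp.le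
  rw [klFun_apply] at h
  have e1 : p * (3 * (q / p - 1) ^ 2 / (2 * (q / p + 2))) =
      3 * (q - p) ^ 2 / (2 * (q + 2 * p)) := by
    field_simp
  have e2 : p * (q / p * log (q / p) + 1 - q / p) = q * log (q / p) - q + p := by
    field_simp
    ring
  rwa [e1, e2] at h

/-- Pinsker's inequality, in nats. -/
theorem sq_sum_abs_sub_le_two_mul_sum_mul_log {ι : Type*} [Fintype ι] {p q : ι → ℝ}
    (hp : ∀ a, 0 ≤ p a) (hq : ∀ a, 0 ≤ q a) (hp1 : ∑ a, p a = 1) (hq1 : ∑ a, q a = 1)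
    (hqp : ∀ a, p a = 0 → q a = 0) :
    (∑ a, |q a - p a|) ^ 2 ≤ 2 * ∑ a, q a * log (q a / p a) := by
  have hw : ∀ a, 0 ≤ q a + 2 * p a := fun a ↦ by linarith [hp a, hq a]
  have hcs : (∑ a, |q a - p a|) ^ 2 ≤
      (∑ a, (q a - p a) ^ 2 / (q a + 2 * p a)) * ∑ a, (q a + 2 * p a) := by
    refine Finset.sum_sq_le_sum_mul_sum_of_sq_le_mul _ (fun a _ ↦ div_nonneg (sq_nonneg _) (hw a))
      (fun a _ ↦ hw a) fun a _ ↦ ?_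
    rw [sq_abs]
    rcases (hw a).eq_or_lt with h | h
    · have : p a = 0 := by linarith [hp a, hq a]
      simp [this, hqp a this]
    · rw [div_mul_cancel₀ _ h.ne']
  have hpointwise : ∑ a, 3 * (q a - p a) ^ 2 / (2 * (q a + 2 * p a)) ≤
      ∑ a, (q a * log (q a / p a) - q a + p a) :=
    Finset.sum_le_sum fun a _ ↦ three_mul_sq_div_le_mul_log_div_sub_add (hp a) (hq a) (hqp a)
  have hmass : ∑ a, (q a + 2 * p a) = 3 := by
    rw [Finset.sum_add_distrib, ← Finset.mul_sum, hq1, hp1]; norm_num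
  have hscale : ∑ a, 3 * (q a - p a) ^ 2 / (2 * (q a + 2 * p a)) =
      3 / 2 * ∑ a, (q a - p a) ^ 2 / (q a + 2 * p a) := by
    rw [Finset.mul_sum]
    exact Finset.sum_congr rfl fun a _ ↦ (div_mul_div_comm _ _ _ _).symm
  simp only [Finset.sum_add_distrib, Finset.sum_sub_distrib, hp1, hq1] at hpointwise
  rw [hmass] at hcs
  linarith

theorem pow_eq_exp_neg_mul_log_div_mul_pow {p q : ℝ} (hp : 0 < p) (hq : 0 < q) (c : ℕ) :
    p ^ c = exp (-(c * log (q / p))) * q ^ c := by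
  rw [← mul_neg, ← log_inv, inv_div, exp_nat_mul, exp_log (div_pos hp hq), div_pow,
    div_mul_cancel₀ _ (pow_ne_zero c hq.ne')]

namespace MethodOfTypes

open Finset

variable {X : Type*} [DecidableEq X] {n : ℕ}

def count (x : Fin n → X) (a : X) : ℕ := #{i | x i = a}

def empirical (x : Fin n → X) (a : X) : ℝ := count x a / n

theorem empirical_nonneg (x : Fin n → X) (a : X) : 0 ≤ empirical x a := by
  unfold empirical; positivity

theorem count_le (x : Fin n → X) (a : X) : count x a ≤ n :=
  (card_filter_le _ _).trans_eq (card_fin n)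

theorem exists_apply_eq_of_count_ne_zero {x : Fin n → X} {a : X} (h : count x a ≠ 0) :
    ∃ i, x i = a := by
  obtain ⟨i, hi⟩ := card_ne_zero.1 h
  exact ⟨i, (mem_filter.1 hi).2⟩

variable [Fintype X]

theorem sum_count (x : Fin n → X) : ∑ a, count x a = n := by
  simpa [count] using
    (card_eq_sum_card_fiberwise (s := univ) (t := univ) fun i _ ↦ mem_univ (x i)).symm

theorem prod_apply_eq_prod_pow_count {M : Type*} [CommMonoid M] (x : Fin n → X) (f : X → M) :
    ∏ i, f (x i) = ∏ a, f a ^ count x a := by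
  rw [← prod_fiberwise' univ x f]
  exact prod_congr rfl fun a _ ↦ prod_const _

theorem sum_empirical (hn : 0 < n) (x : Fin n → X) : ∑ a, empirical x a = 1 := by
  simp_rw [empirical]
  rw [← sum_div, ← Nat.cast_sum, sum_count, div_self (by positivity)]

theorem card_image_count_le :
    #((univ : Finset (Fin n → X)).image count) ≤ (n + 1) ^ Fintype.card X := by
  have hsub : (univ : Finset (Fin n → X)).image count ⊆ Fintype.piFinset fun _ ↦ range (n + 1) :=
    fun t ht ↦ by
      obtain ⟨x, -, rfl⟩ := mem_image.1 ht
      exact Fintype.mem_piFinset.2 fun a ↦ mem_range_succ_iff.2 (count_le x a)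
  simpa using Finset.card_le_card hsub

theorem sum_prod_empirical_le :
    ∑ x : Fin n → X, ∏ i, empirical x (x i) ≤ ((n : ℝ) + 1) ^ Fintype.card X := by
  have htotal : ∀ x : Fin n → X, (∑ a, empirical x a) ^ n = 1 := fun x ↦ by
    rcases n.eq_zero_or_pos with rfl | hn
    · exact pow_zero _
    · rw [sum_empirical hn, one_pow]
  have htypes : #((univ : Finset (Fin n → X)).image empirical) ≤ (n + 1) ^ Fintype.card X := by
    rw [show (empirical : (Fin n → X) → X → ℝ) = (fun t a ↦ (t a : ℝ) / n) ∘ count from rfl,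
      ← Finset.image_image]
    exact card_image_le.trans card_image_count_le
  calc ∑ x : Fin n → X, ∏ i, empirical x (x i)
      = ∑ q ∈ univ.image empirical, ∑ x with empirical x = q, ∏ i, empirical x (x i) :=
        (sum_fiberwise_of_maps_to (fun x _ ↦ mem_image_of_mem _ (mem_univ x)) _).symm
    _ = ∑ q ∈ univ.image empirical, ∑ x with empirical x = q, ∏ i, q (x i) :=
        sum_congr rfl fun q _ ↦ sum_congr rfl fun x hx ↦ by rw [(mem_filter.1 hx).2]
    _ ≤ ∑ q ∈ univ.image empirical, ∑ x : Fin n → X, ∏ i, q (x i) := by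
        refine sum_le_sum fun q hq ↦ sum_le_sum_of_subset_of_nonneg (filter_subset _ _) ?_
        obtain ⟨y, -, rfl⟩ := mem_image.1 hq
        exact fun x _ _ ↦ prod_nonneg fun i _ ↦ empirical_nonneg y _
    _ = #((univ : Finset (Fin n → X)).image empirical) := by
        rw [card_eq_sum_ones, Nat.cast_sum]
        refine sum_congr rfl fun q hq ↦ ?_
        obtain ⟨x, -, rfl⟩ := mem_image.1 hq
        rw [← Fintype.sum_pow, htotal, Nat.cast_one]
    _ ≤ ((n : ℝ) + 1) ^ Fintype.card X := by exact_mod_cast htypes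

theorem prod_eq_exp_neg_mul_sum_mul_log_mul_prod (hn : 0 < n) {P : X → ℝ} {x : Fin n → X}
    (hx : ∀ i, 0 < P (x i)) :
    ∏ i, P (x i) = exp (-(n * ∑ a, empirical x a * log (empirical x a / P a))) *
      ∏ i, empirical x (x i) := by
  rw [prod_apply_eq_prod_pow_count x P, prod_apply_eq_prod_pow_count x (empirical x), mul_sum,
    ← sum_neg_distrib, exp_sum, ← prod_mul_distrib]
  refine prod_congr rfl fun a _ ↦ ?_
  by_cases hc : count x a = 0
  · simp [hc, empirical]
  obtain ⟨i, rfl⟩ := exists_apply_eq_of_count_ne_zero hc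
  have hq : 0 < empirical x (x i) := by unfold empirical; positivity
  rw [pow_eq_exp_neg_mul_log_div_mul_pow (hx i) hq, ← mul_assoc, empirical,
    mul_div_cancel₀ _ (by positivity : (n : ℝ) ≠ 0)]

theorem prod_le_exp_mul_prod_empirical {P : X → ℝ} (hP0 : ∀ a, 0 ≤ P a) (hP1 : ∑ a, P a = 1)
    {δ : ℝ} (hδ : 0 ≤ δ) {x : Fin n → X} (hx : δ < ∑ a, |empirical x a - P a|) :
    ∏ i, P (x i) ≤ exp (-(n * δ ^ 2 / 2)) * ∏ i, empirical x (x i) := by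
  rcases n.eq_zero_or_pos with rfl | hn
  · simp
  by_cases hpos : ∀ i, 0 < P (x i)
  swap
  · obtain ⟨i, hi⟩ := not_forall.1 hpos
    rw [prod_eq_zero (mem_univ i) (le_antisymm (not_lt.1 hi) (hP0 _))]
    exact mul_nonneg (exp_nonneg _) (prod_nonneg fun i _ ↦ empirical_nonneg x _)
  have hac : ∀ a, P a = 0 → empirical x a = 0 := fun a ha ↦ by
    by_contra h
    obtain ⟨i, rfl⟩ := exists_apply_eq_of_count_ne_zero (x := x) (a := a)
      fun hc ↦ h (by simp [empirical, hc])
    exact (hpos i).ne' ha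
  have hpinsker := sq_sum_abs_sub_le_two_mul_sum_mul_log hP0
    (empirical_nonneg x) hP1 (sum_empirical hn x) hac
  have hδ2 := pow_le_pow_left₀ hδ hx.le 2
  rw [prod_eq_exp_neg_mul_sum_mul_log_mul_prod hn hpos]
  gcongr
  · exact prod_nonneg fun i _ ↦ empirical_nonneg x _
  · nlinarith [(Nat.cast_pos.2 hn : (0 : ℝ) < n)]

end MethodOfTypes

theorem two_rpow_eq_exp_mul_pow (n k : ℕ) (δ : ℝ) :
    (2 : ℝ) ^ (-(n : ℝ) * (δ ^ 2 / (2 * log 2) - k * logb 2 (n + 1) / n)) =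
      exp (-(n * δ ^ 2 / 2)) * ((n : ℝ) + 1) ^ k := by
  rcases n.eq_zero_or_pos with rfl | hn
  · simp
  rw [rpow_def_of_pos two_pos, ← exp_log (by positivity : (0 : ℝ) < (n + 1) ^ k), ← exp_add,
    log_pow, logb]
  congr 1
  field_simp
  ring

/-- **Lemma 2 (Variant of Chernoff's bound).** -/
theorem chernoff_variant (X : Type) [Fintype X] [DecidableEq X]
    (P : X → ℝ) (hP0 : ∀ a, 0 ≤ P a) (hP1 : ∑ a, P a = 1)
    (n : ℕ) (δ : ℝ) (hδ : 0 < δ) :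
    ∑ x : Fin n → X,
        Set.indicator
          {x : Fin n → X |
            δ < ∑ a : X,
              |((Finset.univ.filter fun i => x i = a).card : ℝ) / n - P a|}
          (fun x => ∏ i, P (x i)) x
      ≤ (2 : ℝ) ^ (-(n : ℝ) * (δ ^ 2 / (2 * Real.log 2)
          - (Fintype.card X : ℝ) * Real.logb 2 (n + 1) / n)) := by
  rw [two_rpow_eq_exp_mul_pow]
  calc _ ≤ ∑ x : Fin n → X, exp (-(n * δ ^ 2 / 2)) * ∏ i, MethodOfTypes.empirical x (x i) :=
        Finset.sum_le_sum fun x _ ↦ Set.indicator_apply_le'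
          (MethodOfTypes.prod_le_exp_mul_prod_empirical hP0 hP1 hδ.le)
          fun _ ↦ mul_nonneg (exp_nonneg _)
            (Finset.prod_nonneg fun i _ ↦ MethodOfTypes.empirical_nonneg x _)
    _ ≤ exp (-(n * δ ^ 2 / 2)) * ((n : ℝ) + 1) ^ Fintype.card X := by
        rw [← Finset.mul_sum]
        gcongr
        exact MethodOfTypes.sum_prod_empirical_le
end
end

section
/- Dual cone of a decreasing intersection of cones: let V be a finite-dimensional real inner product space and let (K_n)_{n≥1} be a sequence of closed convex cones in V with K_{n+1} ⊆ K_n for all n. Then the dual cone of ⋂_{n≥1} K_n equals the closure of ⋃_{n≥1} K_n*: (⋂_n K_n)* = cl(⋃_n K_n*). -/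
open scoped RealInnerProductSpace

/-!
For any family of closed convex cones, biduality gives `(⋂ i, Cᵢ)* = cl(conic hull ⋃ i, Cᵢ*)`:
the right-hand side is a closed convex cone whose dual is `⋂ i, Cᵢ** = ⋂ i, Cᵢ`.
When the family is decreasing, the duals increase, so their union is already a convex cone
and the conic hull can be dropped.
-/

theorem ClosedSubmodule.coe_iSup_of_directed {ι : Sort*} {R M : Type*} [Semiring R]
    [AddCommMonoid M] [TopologicalSpace M] [Module R M] [ContinuousAdd M]
    [ContinuousConstSMul R M] [Nonempty ι] {f : ι → ClosedSubmodule R M}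
    (hf : Directed (· ≤ ·) f) :
    ((⨆ i, f i : ClosedSubmodule R M) : Set M) = closure (⋃ i, (f i : Set M)) := by
  rw [coe_iSup, Submodule.carrier_eq_coe,
    Submodule.coe_iSup_of_directed (fun i ↦ (f i).toSubmodule) (hf.mono_comp _ fun _ _ h ↦ h)]
  rfl

namespace ProperCone

variable {E : Type*} [NormedAddCommGroup E] [InnerProductSpace ℝ E] [CompleteSpace E]

theorem innerDual_iInter {ι : Sort*} (C : ι → ProperCone ℝ E) :
    innerDual (⋂ i, (C i : Set E)) = ⨆ i, innerDual (C i : Set E) := by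
  set D := ⨆ i, innerDual (C i : Set E)
  refine le_antisymm ?_ (iSup_le fun i ↦ innerDual_le_innerDual (Set.iInter_subset _ i))
  have hsub : (innerDual (D : Set E) : Set E) ⊆ ⋂ i, (C i : Set E) := by
    refine Set.subset_iInter fun i y hy ↦ ?_
    rw [← innerDual_innerDual (C i)]
    exact fun x hx ↦ hy (le_iSup (fun i ↦ innerDual (C i : Set E)) i hx)
  simpa only [innerDual_innerDual] using innerDual_le_innerDual hsub

theorem innerDual_iInter_eq_closure_iUnion {ι : Sort*} [Nonempty ι] {C : ι → ProperCone ℝ E}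
    (hC : Directed (· ≥ ·) C) :
    (innerDual (⋂ i, (C i : Set E)) : Set E) =
      closure (⋃ i, (innerDual (C i : Set E) : Set E)) := by
  rw [innerDual_iInter, ClosedSubmodule.coe_iSup_of_directed]
  exact hC.mono_comp _ fun _ _ h ↦ innerDual_le_innerDual h

end ProperCone

/-- **Dual cone of a decreasing intersection of cones.**
For a decreasing sequence `(K_n)_{n ≥ 1}` of closed convex cones in a
finite-dimensional real inner product space,
`(⋂_n K_n)* = cl(⋃_n K_n*)`. -/
theorem dualCone_iInter_eq_closure_iUnion_dualCone
    (V : Type) [NormedAddCommGroup V] [InnerProductSpace ℝ V]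
    [FiniteDimensional ℝ V] (K : ℕ → Set V)
    (hzero : ∀ n, 1 ≤ n → (0 : V) ∈ K n)
    (hadd : ∀ n, 1 ≤ n → ∀ x ∈ K n, ∀ y ∈ K n, x + y ∈ K n)
    (hsmul : ∀ n, 1 ≤ n → ∀ c : ℝ, 0 ≤ c → ∀ x ∈ K n, c • x ∈ K n)
    (hclosed : ∀ n, 1 ≤ n → IsClosed (K n))
    (hmono : ∀ n, 1 ≤ n → K (n + 1) ⊆ K n) :
    {y : V | ∀ x ∈ ⋂ n : ℕ, ⋂ _ : 1 ≤ n, K n, 0 ≤ ⟪x, y⟫}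
      = closure (⋃ n : ℕ, ⋃ _ : 1 ≤ n, {y : V | ∀ x ∈ K n, 0 ≤ ⟪x, y⟫}) := by
  let C (m : ℕ) : ProperCone ℝ V :=
    { carrier := K (m + 1)
      zero_mem' := hzero _ m.succ_pos
      add_mem' := fun ha hb ↦ hadd _ m.succ_pos _ ha _ hb
      smul_mem' := fun c _ ↦ hsmul _ m.succ_pos c c.2 _
      isClosed' := hclosed _ m.succ_pos }
  have hC : Antitone C := antitone_nat_of_succ_le fun m _ hx ↦ hmono _ m.succ_pos hx
  have hinter : ⋂ n : ℕ, ⋂ _ : 1 ≤ n, K n = ⋂ m, K (m + 1) := iInf_ge_eq_iInf_nat_add K 1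
  have hunion : ⋃ n : ℕ, ⋃ _ : 1 ≤ n, {y : V | ∀ x ∈ K n, 0 ≤ ⟪x, y⟫} =
      ⋃ m, {y : V | ∀ x ∈ K (m + 1), 0 ≤ ⟪x, y⟫} :=
    iSup_ge_eq_iSup_nat_add _ 1
  rw [hinter, hunion]
  exact ProperCone.innerDual_iInter_eq_closure_iUnion hC.directed_ge
end
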